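/- For any two distinct strings x, y over Σ and any letters λ, μ ∈ Σ with λ ≤ μ: if x ≺ y in V-order, then xλ ≺ yμ (where xλ and yμ denote the strings obtained by appending λ to x and μ to y respectively). -/

import Mathlib

/-!
Write `vpath x ℓ` for the member of length `ℓ` of the path `x, x*, x**, …, ε`. Then `x ≺ y` says
that the path of `x` is a proper initial part of the path of `y`, or that at the first length where
the two paths part, the two children of their common string compare at the last position where
they differ.

If `v` has last letter `c`, then `(v a)* = v* a` when `c ≤ a` and `(v a)* = v` when `a < c`.
Last letters weakly increase as a path descends, so the path of `x a` agrees with that of `x` up to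
the largest length `vcut x a` at which the last letter exceeds `a`, and above it consists of the
strings `vpath x ℓ ++ [a]`. At the first length where the paths of `x λ` and `y μ` part, this
reduces the comparison either to the comparison of `x` and `y` at the same length, or to the fact
that a child of `w` whose last letter is at most `μ` lies letterwise below `w μ`.
-/

variable {α : Type*} [LinearOrder α]

/-- The star operation on strings: delete the letter `x_h`, where `h` is the
start of the longest non-decreasing suffix (so `h = 1` iff the whole string is
non-decreasing, and otherwise `x_{h-1} > x_h ≤ x_{h+1} ≤ ⋯ ≤ x_n`). -/
def vstar : List α → List α
  | [] => []
  | a :: t => if List.IsChain (· ≤ ·) (a :: t) then t else a :: vstar t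

/-- V-order `≺` between distinct strings `x`, `y`: either `x` lies on the path
`y, y*, y^{2*}, …, ε`, or (if neither lies on the path of the other) taking the
least `s, t` with `x^{(s+1)*} = y^{(t+1)*}` and the greatest position `j` at
which `s = x^{s*}` and `t = y^{t*}` differ, the letter of `x^{s*}` at `j` is
smaller than that of `y^{t*}`. -/
def VLess (x y : List α) : Prop :=
  (∃ k : ℕ, 0 < k ∧ vstar^[k] y = x) ∨
  ((¬ ∃ k : ℕ, vstar^[k] y = x) ∧ (¬ ∃ k : ℕ, vstar^[k] x = y) ∧
    ∃ s t : ℕ,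
      vstar^[s + 1] x = vstar^[t + 1] y ∧
      (∀ s' t' : ℕ, vstar^[s' + 1] x = vstar^[t' + 1] y → s ≤ s' ∧ t ≤ t') ∧
      ∃ j : ℕ, j < (vstar^[s] x).length ∧
        (∀ j' : ℕ, j < j' → (vstar^[s] x)[j']? = (vstar^[t] y)[j']?) ∧
        ∃ a b : α, (vstar^[s] x)[j]? = some a ∧ (vstar^[t] y)[j]? = some b ∧
          a < b)

theorem vstar_cons (a : α) (t : List α) :
    vstar (a :: t) = if List.IsChain (· ≤ ·) (a :: t) then t else a :: vstar t := rfl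

@[simp]
theorem vstar_singleton (a : α) : vstar [a] = [] := by
  simp [vstar_cons]

@[simp]
theorem length_vstar (x : List α) : (vstar x).length = x.length - 1 := by
  induction x with
  | nil => rfl
  | cons a t ih =>
    rw [vstar_cons]
    split_ifs with h
    · simp
    · have ht : t ≠ [] := by rintro rfl; exact h (List.isChain_singleton a)
      have := List.length_pos_iff.2 ht
      simp only [List.length_cons, ih]
      omega

theorem length_iterate_vstar (k : ℕ) (x : List α) : (vstar^[k] x).length = x.length - k := by
  induction k with
  | zero => rfl
  | succ k ih => rw [Function.iterate_succ_apply', length_vstar, ih]; omega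

theorem List.isChain_append_singleton_iff {β : Type*} {R : β → β → Prop} {v : List β} {c a : β}
    (hc : v.getLast? = some c) : List.IsChain R (v ++ [a]) ↔ List.IsChain R v ∧ R c a := by
  simp [List.isChain_append, hc]

theorem vstar_append_of_le {v : List α} {c a : α} (hc : v.getLast? = some c) (hca : c ≤ a) :
    vstar (v ++ [a]) = vstar v ++ [a] := by
  induction v with
  | nil => simp at hc
  | cons d t ih =>
    rcases eq_or_ne t [] with rfl | ht
    · obtain rfl : d = c := by simpa using hc
      simp [vstar_cons, hca]
    · have hct : t.getLast? = some c := by rwa [List.getLast?_cons_of_ne_nil ht] at hc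
      have hchain := List.isChain_append_singleton_iff (R := (· ≤ ·)) (a := a) hc
      simp only [List.cons_append] at hchain
      rw [List.cons_append, vstar_cons, vstar_cons]
      simp only [hchain, hca, and_true]
      split_ifs <;> simp [ih hct]

theorem vstar_append_of_lt {v : List α} {c a : α} (hc : v.getLast? = some c) (hac : a < c) :
    vstar (v ++ [a]) = v := by
  induction v with
  | nil => simp at hc
  | cons d t ih =>
    rcases eq_or_ne t [] with rfl | ht
    · obtain rfl : d = c := by simpa using hc
      simp [vstar_cons, hac.not_ge]
    · have hct : t.getLast? = some c := by rwa [List.getLast?_cons_of_ne_nil ht] at hc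
      rw [List.cons_append, vstar_cons, ← List.cons_append,
        if_neg fun h => hac.not_ge ((List.isChain_append_singleton_iff hc).1 h).2, ih hct]

theorem getLast?_le_getLast?_vstar {v : List α} {c c' : α} (hc : v.getLast? = some c)
    (hc' : (vstar v).getLast? = some c') : c ≤ c' := by
  induction v with
  | nil => simp at hc
  | cons d t ih =>
    rcases eq_or_ne t [] with rfl | ht
    · simp at hc'
    · have hct : t.getLast? = some c := by rwa [List.getLast?_cons_of_ne_nil ht] at hc
      rw [vstar_cons] at hc'
      split_ifs at hc' with hchain
      · exact (Option.some_inj.1 (hct.symm.trans hc')).le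
      · rcases eq_or_ne (vstar t) [] with hvt | hvt
        · obtain ⟨e, rfl⟩ : ∃ e, t = [e] := by
            have hlen := congrArg List.length hvt
            rw [length_vstar, List.length_nil] at hlen
            have := List.length_pos_iff.2 ht
            exact List.length_eq_one_iff.1 (by omega)
          simp only [hvt, List.getLast?_singleton, Option.some_inj] at hct hc'
          subst hct hc'
          exact le_of_not_ge fun h => hchain (List.isChain_pair.2 h)
        · exact ih hct (by rwa [List.getLast?_cons_of_ne_nil hvt] at hc')

theorem forall₂_le_vstar_append {v : List α} {c b : α} (hc : v.getLast? = some c) (hcb : c ≤ b) :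
    List.Forall₂ (· ≤ ·) v (vstar v ++ [b]) := by
  induction v with
  | nil => simp at hc
  | cons d t ih =>
    rw [vstar_cons]
    split_ifs with hchain
    · exact List.isChain_cons_append_singleton_iff_forall₂.1
        ((List.isChain_append_singleton_iff hc).2 ⟨hchain, hcb⟩)
    · have ht : t ≠ [] := by rintro rfl; exact hchain (List.isChain_singleton d)
      exact List.Forall₂.cons le_rfl (ih (by rwa [List.getLast?_cons_of_ne_nil ht] at hc))

/-- The comparison in the second clause of `VLess`; on strings of equal length it is the
colexicographic order. -/
def LastDiffLT (u v : List α) : Prop :=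
  ∃ j : ℕ, j < u.length ∧ (∀ j' : ℕ, j < j' → u[j']? = v[j']?) ∧
    ∃ a b : α, u[j]? = some a ∧ v[j]? = some b ∧ a < b

section LastDiffLT

variable {u v : List α} {c d : α}

@[simp]
theorem not_lastDiffLT_nil_left : ¬ LastDiffLT [] v := by
  simp [LastDiffLT]

@[simp]
theorem not_lastDiffLT_nil_right : ¬ LastDiffLT u [] := by
  simp [LastDiffLT]

theorem LastDiffLT.irrefl (u : List α) : ¬ LastDiffLT u u := by
  rintro ⟨j, -, -, a, b, ha, hb, hab⟩
  rw [ha, Option.some_inj] at hb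
  exact hab.ne hb

theorem lastDiffLT_cons_cons :
    LastDiffLT (c :: u) (d :: v) ↔ (u = v ∧ c < d) ∨ LastDiffLT u v := by
  constructor
  · rintro ⟨_ | j, hj, hup, a, b, ha, hb, hab⟩
    · simp only [List.getElem?_cons_zero, Option.some_inj] at ha hb
      subst ha hb
      exact .inl ⟨List.ext_getElem? fun i => by simpa using hup (i + 1) i.succ_pos, hab⟩
    · exact .inr ⟨j, by simpa using hj, fun j' h => by simpa using hup (j' + 1) (by omega),
        a, b, by simpa using ha, by simpa using hb, hab⟩
  · rintro (⟨rfl, hcd⟩ | ⟨j, hj, hup, a, b, ha, hb, hab⟩)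
    · refine ⟨0, by simp, fun j' h => ?_, c, d, rfl, rfl, hcd⟩
      obtain ⟨j', rfl⟩ := Nat.exists_eq_add_of_lt h
      simp
    · refine ⟨j + 1, by simpa using hj, fun j' h => ?_, a, b, by simpa using ha,
        by simpa using hb, hab⟩
      obtain ⟨j', rfl⟩ := Nat.exists_eq_add_of_lt h
      simpa [Nat.add_right_comm] using hup (j + j' + 1) (by omega)

theorem LastDiffLT.asymm (h : LastDiffLT u v) : ¬ LastDiffLT v u := by
  induction u generalizing v with
  | nil => simp at h
  | cons c u ih =>
    obtain _ | ⟨d, v⟩ := v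
    · simp at h
    rw [lastDiffLT_cons_cons] at h ⊢
    rintro (⟨rfl, hdc⟩ | h')
    · rcases h with ⟨-, hcd⟩ | h
      · exact hcd.asymm hdc
      · exact LastDiffLT.irrefl _ h
    · rcases h with ⟨rfl, -⟩ | h
      · exact LastDiffLT.irrefl _ h'
      · exact ih h h'

theorem lastDiffLT_append_singleton_iff (h : u.length = v.length) :
    LastDiffLT (u ++ [c]) (v ++ [d]) ↔ c < d ∨ c = d ∧ LastDiffLT u v := by
  induction u generalizing v with
  | nil =>
    obtain rfl := List.length_eq_zero_iff.1 h.symm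
    simp [lastDiffLT_cons_cons]
  | cons e u ih =>
    obtain _ | ⟨f, v⟩ := v
    · simp at h
    have hlen : u.length = v.length := Nat.succ.inj h
    simp only [List.cons_append, lastDiffLT_cons_cons, ih hlen, List.append_singleton_inj]
    tauto

theorem lastDiffLT_of_getLast?_lt (h : u.length = v.length) (hc : u.getLast? = some c)
    (hd : v.getLast? = some d) (hcd : c < d) : LastDiffLT u v := by
  obtain ⟨u', rfl⟩ := List.getLast?_eq_some_iff.1 hc
  obtain ⟨v', rfl⟩ := List.getLast?_eq_some_iff.1 hd
  exact (lastDiffLT_append_singleton_iff (by simpa using h)).2 (.inl hcd)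

theorem LastDiffLT.getLast?_le (huv : LastDiffLT u v) (h : u.length = v.length)
    (hc : u.getLast? = some c) (hd : v.getLast? = some d) : c ≤ d := by
  obtain ⟨u', rfl⟩ := List.getLast?_eq_some_iff.1 hc
  obtain ⟨v', rfl⟩ := List.getLast?_eq_some_iff.1 hd
  rcases (lastDiffLT_append_singleton_iff (by simpa using h)).1 huv with hcd | ⟨rfl, -⟩
  exacts [hcd.le, le_rfl]

theorem lastDiffLT_of_forall₂ (h : List.Forall₂ (· ≤ ·) u v) (hne : u ≠ v) : LastDiffLT u v := by
  induction h with
  | nil => exact absurd rfl hne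
  | @cons c d u v hcd _ ih =>
    rw [lastDiffLT_cons_cons]
    by_cases huv : u = v
    · subst huv
      exact .inl ⟨rfl, hcd.lt_of_ne fun h => hne (h ▸ rfl)⟩
    · exact .inr (ih huv)

theorem lastDiffLT_vstar_append {w : List α} {b : α} (hw : vstar u = w) (hc : u.getLast? = some c)
    (hcb : c ≤ b) (hne : u ≠ w ++ [b]) : LastDiffLT u (w ++ [b]) :=
  lastDiffLT_of_forall₂ (hw ▸ forall₂_le_vstar_append hc hcb) hne

end LastDiffLT

def vpath (x : List α) (ℓ : ℕ) : List α := vstar^[x.length - ℓ] x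

section vpath

variable {x y : List α} {ℓ ℓ' : ℕ}

theorem length_vpath (h : ℓ ≤ x.length) : (vpath x ℓ).length = ℓ := by
  rw [vpath, length_iterate_vstar]; omega

@[simp]
theorem vpath_length (x : List α) : vpath x x.length = x := by
  simp [vpath]

@[simp]
theorem vpath_append_length (x : List α) (a : α) :
    vpath (x ++ [a]) (x.length + 1) = x ++ [a] := by
  simpa using vpath_length (x ++ [a])

theorem iterate_vstar_eq_nil (h : x.length ≤ ℓ) : vstar^[ℓ] x = [] :=
  List.length_eq_zero_iff.1 (by rw [length_iterate_vstar]; omega)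

@[simp]
theorem vpath_zero (x : List α) : vpath x 0 = [] :=
  iterate_vstar_eq_nil le_rfl

theorem iterate_vstar_eq_vpath (k : ℕ) (x : List α) : vstar^[k] x = vpath x (x.length - k) := by
  rcases le_total k x.length with h | h
  · rw [vpath, Nat.sub_sub_self h]
  · rw [iterate_vstar_eq_nil h, Nat.sub_eq_zero_of_le h, vpath_zero]

theorem iterate_vstar_vpath (hℓ : ℓ ≤ x.length) (k : ℕ) :
    vstar^[k] (vpath x ℓ) = vpath x (ℓ - k) := by
  rw [vpath, ← Function.iterate_add_apply, iterate_vstar_eq_vpath]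
  congr 1
  omega

theorem vstar_vpath (h : ℓ + 1 ≤ x.length) : vstar (vpath x (ℓ + 1)) = vpath x ℓ :=
  iterate_vstar_vpath (k := 1) h

theorem vpath_ne_nil (h₁ : 1 ≤ ℓ) (h : ℓ ≤ x.length) : vpath x ℓ ≠ [] := by
  intro hnil
  have := length_vpath h
  simp [hnil] at this
  omega

theorem exists_getLast?_vpath (h₁ : 1 ≤ ℓ) (h : ℓ ≤ x.length) :
    ∃ c, (vpath x ℓ).getLast? = some c :=
  Option.isSome_iff_exists.1 (List.getLast?_isSome.2 (vpath_ne_nil h₁ h))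

theorem vpath_eq_vpath_of_le (hℓ' : ℓ' ≤ ℓ) (hx : ℓ ≤ x.length) (hy : ℓ ≤ y.length)
    (h : vpath x ℓ = vpath y ℓ) : vpath x ℓ' = vpath y ℓ' := by
  rw [← Nat.sub_sub_self hℓ', ← iterate_vstar_vpath hx, ← iterate_vstar_vpath hy, h]

theorem exists_iterate_vstar_eq_iff :
    (∃ k, vstar^[k] y = x) ↔ x.length ≤ y.length ∧ vpath y x.length = x := by
  constructor
  · rintro ⟨k, rfl⟩
    rw [length_iterate_vstar, ← iterate_vstar_eq_vpath]
    exact ⟨Nat.sub_le _ _, rfl⟩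
  · rintro ⟨-, h⟩
    exact ⟨_, h⟩

theorem getLast?_vpath_antitone (h₁ : 1 ≤ ℓ) (hℓ : ℓ ≤ ℓ') (hℓ' : ℓ' ≤ x.length) {c c' : α}
    (hc : (vpath x ℓ).getLast? = some c) (hc' : (vpath x ℓ').getLast? = some c') : c' ≤ c := by
  induction ℓ', hℓ using Nat.le_induction generalizing c' with
  | base => exact (Option.some_inj.1 (hc'.symm.trans hc)).le
  | succ m hm ih =>
    obtain ⟨d, hd⟩ := exists_getLast?_vpath (h₁.trans hm) (by omega : m ≤ x.length)
    exact (getLast?_le_getLast?_vstar hc' (by rwa [vstar_vpath hℓ'])).trans (ih (by omega) hd)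

theorem vpath_cases_of_ne (hxy : x ≠ y) :
    (x.length < y.length ∧ vpath y x.length = x) ∨ (y.length < x.length ∧ vpath x y.length = y) ∨
    ∃ L, L < x.length ∧ L < y.length ∧ vpath x L = vpath y L ∧
      vpath x (L + 1) ≠ vpath y (L + 1) := by
  obtain ⟨M, hM, hMle, hMmax⟩ : ∃ M, vpath x M = vpath y M ∧ M ≤ min x.length y.length ∧
      ∀ k, M < k → k ≤ min x.length y.length → vpath x k ≠ vpath y k :=
    ⟨_, Nat.findGreatest_spec (P := fun ℓ => vpath x ℓ = vpath y ℓ) (Nat.zero_le _) (by simp),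
      Nat.findGreatest_le _,
      fun _ hk hkle => Nat.findGreatest_is_greatest hk hkle⟩
  by_cases hMlt : M < min x.length y.length
  · exact .inr (.inr ⟨M, by omega, by omega, hM, hMmax _ (lt_add_one M) hMlt⟩)
  rcases lt_trichotomy x.length y.length with hlt | heq | hgt
  · obtain rfl : M = x.length := by omega
    exact .inl ⟨hlt, by rw [← hM, vpath_length]⟩
  · obtain rfl : M = x.length := by omega
    exact absurd (by rw [← vpath_length x, hM, heq, vpath_length]) hxy
  · obtain rfl : M = y.length := by omega
    exact .inr (.inl ⟨hgt, by rw [hM, vpath_length]⟩)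

end vpath

section VLess

variable {x y : List α}

theorem vpath_ne_of_lastDiffLT {L ℓ : ℕ} (h : LastDiffLT (vpath x (L + 1)) (vpath y (L + 1)))
    (hℓ : L + 1 ≤ ℓ) (hx : ℓ ≤ x.length) (hy : ℓ ≤ y.length) : vpath x ℓ ≠ vpath y ℓ := by
  intro heq
  rw [vpath_eq_vpath_of_le hℓ hx hy heq] at h
  exact LastDiffLT.irrefl _ h

theorem exists_pos_iterate_vstar_eq_iff (hxy : x ≠ y) :
    (∃ k, 0 < k ∧ vstar^[k] y = x) ↔ x.length < y.length ∧ vpath y x.length = x := by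
  constructor
  · rintro ⟨k, -, hk⟩
    obtain ⟨hle, hpath⟩ := exists_iterate_vstar_eq_iff.1 ⟨k, hk⟩
    refine ⟨hle.lt_of_ne fun hlen => hxy ?_, hpath⟩
    rw [← hpath, hlen, vpath_length]
  · rintro ⟨hlt, hpath⟩
    exact ⟨y.length - x.length, by omega, hpath⟩

theorem exists_vpath_branch_of_iterate_vstar {s t : ℕ} (heq : vstar^[s + 1] x = vstar^[t + 1] y)
    (hld : LastDiffLT (vstar^[s] x) (vstar^[t] y)) :
    ∃ L, L < x.length ∧ L < y.length ∧ vpath x L = vpath y L ∧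
      LastDiffLT (vpath x (L + 1)) (vpath y (L + 1)) := by
  simp only [iterate_vstar_eq_vpath] at heq hld
  have hs : s < x.length := by
    by_contra! h
    rw [Nat.sub_eq_zero_of_le h, vpath_zero] at hld
    exact not_lastDiffLT_nil_left hld
  have ht : t < y.length := by
    by_contra! h
    rw [Nat.sub_eq_zero_of_le h, vpath_zero] at hld
    exact not_lastDiffLT_nil_right hld
  have hlen := congrArg List.length heq
  rw [length_vpath (Nat.sub_le _ _), length_vpath (Nat.sub_le _ _)] at hlen
  refine ⟨x.length - (s + 1), by omega, by omega, by rw [heq, hlen], ?_⟩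
  convert hld using 3 <;> omega

theorem vless_of_vpath_branch {L : ℕ} (hLx : L < x.length) (hLy : L < y.length)
    (hag : vpath x L = vpath y L) (hld : LastDiffLT (vpath x (L + 1)) (vpath y (L + 1))) :
    VLess x y := by
  refine .inr ⟨?_, ?_, x.length - (L + 1), y.length - (L + 1), ?_, ?_, ?_⟩
  · rw [exists_iterate_vstar_eq_iff]
    rintro ⟨hle, hpath⟩
    exact vpath_ne_of_lastDiffLT hld hLx le_rfl hle (by rw [vpath_length, hpath])
  · rw [exists_iterate_vstar_eq_iff]
    rintro ⟨hle, hpath⟩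
    exact vpath_ne_of_lastDiffLT hld hLy hle le_rfl (by rw [vpath_length, hpath])
  · simpa only [iterate_vstar_eq_vpath, show x.length - (x.length - (L + 1) + 1) = L by omega,
      show y.length - (y.length - (L + 1) + 1) = L by omega]
  · intro s' t' he
    simp only [iterate_vstar_eq_vpath] at he
    have hlen := congrArg List.length he
    rw [length_vpath (Nat.sub_le _ _), length_vpath (Nat.sub_le _ _)] at hlen
    have : x.length - (s' + 1) ≤ L := by
      by_contra! hgt
      exact vpath_ne_of_lastDiffLT hld hgt (Nat.sub_le _ _) (by omega) (by rw [he, hlen])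
    omega
  · change LastDiffLT (vstar^[_] x) (vstar^[_] y)
    simpa only [iterate_vstar_eq_vpath, Nat.sub_sub_self hLx, Nat.sub_sub_self hLy]

theorem vless_iff (hxy : x ≠ y) : VLess x y ↔
    (x.length < y.length ∧ vpath y x.length = x) ∨
    ∃ L, L < x.length ∧ L < y.length ∧ vpath x L = vpath y L ∧
      LastDiffLT (vpath x (L + 1)) (vpath y (L + 1)) := by
  constructor
  · rintro (hanc | ⟨-, -, s, t, heq, -, hld⟩)
    · exact .inl ((exists_pos_iterate_vstar_eq_iff hxy).1 hanc)
    · exact .inr (exists_vpath_branch_of_iterate_vstar heq hld)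
  · rintro (hanc | ⟨L, hLx, hLy, hag, hld⟩)
    · exact .inl ((exists_pos_iterate_vstar_eq_iff hxy).2 hanc)
    · exact vless_of_vpath_branch hLx hLy hag hld

theorem VLess.lastDiffLT_vpath (h : VLess x y) (hxy : x ≠ y) {L : ℕ} (hLx : L < x.length)
    (hLy : L < y.length) (hag : vpath x L = vpath y L)
    (hdiff : vpath x (L + 1) ≠ vpath y (L + 1)) :
    LastDiffLT (vpath x (L + 1)) (vpath y (L + 1)) := by
  rcases (vless_iff hxy).1 h with ⟨hlt, hpath⟩ | ⟨L₀, hL₀x, hL₀y, hag₀, hld₀⟩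
  · exact absurd (vpath_eq_vpath_of_le hLx le_rfl hlt.le (by rw [vpath_length, hpath])) hdiff
  · obtain rfl : L₀ = L := by
      rcases lt_trichotomy L₀ L with hlt | rfl | hgt
      · exact absurd (vpath_eq_vpath_of_le hlt hLx.le hLy.le hag)
          (vpath_ne_of_lastDiffLT hld₀ le_rfl hL₀x hL₀y)
      · rfl
      · exact absurd (vpath_eq_vpath_of_le hgt hL₀x.le hL₀y.le hag₀) hdiff
    exact hld₀

theorem VLess.vpath_length_ne (h : VLess x y) (hxy : x ≠ y) (hlt : y.length < x.length) :
    vpath x y.length ≠ y := by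
  intro hpath
  rcases (vless_iff hxy).1 h with ⟨hlt', -⟩ | ⟨L₀, -, hL₀y, -, hld₀⟩
  · omega
  · exact vpath_ne_of_lastDiffLT hld₀ hL₀y hlt.le le_rfl (by rw [hpath, vpath_length])

end VLess

def vcut (x : List α) (a : α) : ℕ :=
  Nat.findGreatest (fun ℓ => ∃ c ∈ (vpath x ℓ).getLast?, a < c) x.length

section vcut

variable {x : List α} {a : α} {ℓ : ℕ}

theorem vcut_le_length : vcut x a ≤ x.length :=
  Nat.findGreatest_le _

theorem exists_lt_getLast?_vpath (h₁ : 1 ≤ ℓ) (h : ℓ ≤ vcut x a) :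
    ∃ c ∈ (vpath x ℓ).getLast?, a < c := by
  obtain ⟨c, hc, hac⟩ := Nat.findGreatest_of_ne_zero (rfl : vcut x a = _) (by omega)
  obtain ⟨d, hd⟩ := exists_getLast?_vpath h₁ (h.trans vcut_le_length)
  exact ⟨d, hd, hac.trans_le (getLast?_vpath_antitone h₁ h vcut_le_length hd hc)⟩

theorem getLast?_vpath_le (h : vcut x a < ℓ) (hℓ : ℓ ≤ x.length) :
    ∀ c ∈ (vpath x ℓ).getLast?, c ≤ a := by
  intro c hc
  by_contra! hac
  exact Nat.findGreatest_is_greatest h hℓ ⟨c, hc, hac⟩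

theorem vpath_append_succ (h : vcut x a ≤ ℓ) (hℓ : ℓ ≤ x.length) :
    vpath (x ++ [a]) (ℓ + 1) = vpath x ℓ ++ [a] := by
  revert h
  induction hℓ using Nat.decreasingInduction with
  | self => simp
  | of_succ k hk ih =>
    intro h
    obtain ⟨c, hc⟩ := exists_getLast?_vpath (by omega) hk
    have hk' : k + 1 + 1 ≤ (x ++ [a]).length := by
      simp only [List.length_append, List.length_singleton]; omega
    rw [← vstar_vpath hk', ih (by omega),
      vstar_append_of_le hc (getLast?_vpath_le (by omega) hk c hc), vstar_vpath hk]

theorem vpath_append_of_le_vcut (h : ℓ ≤ vcut x a) : vpath (x ++ [a]) ℓ = vpath x ℓ := by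
  have hcut : vpath (x ++ [a]) (vcut x a) = vpath x (vcut x a) := by
    rw [← vstar_vpath (by simpa using vcut_le_length), vpath_append_succ le_rfl vcut_le_length]
    rcases Nat.eq_zero_or_pos (vcut x a) with h0 | hpos
    · simp [h0]
    · obtain ⟨c, hc, hac⟩ := exists_lt_getLast?_vpath hpos le_rfl
      exact vstar_append_of_lt hc hac
  exact vpath_eq_vpath_of_le h (by simpa using vcut_le_length.trans (Nat.le_succ _))
    vcut_le_length hcut

end vcut

section Append

variable {x y : List α} {a b : α}

theorem VLess.vpath_eq_of_vpath_append_eq (h : VLess x y) (hxy : x ≠ y) {L : ℕ} (hLx : L ≤ vcut x a)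
    (hLy : L ≤ y.length) (hag : vpath (x ++ [a]) L = vpath (y ++ [b]) L) :
    vpath x L = vpath y L := by
  have hxa : vcut x a ≤ x.length := vcut_le_length
  induction L with
  | zero => simp
  | succ L ih =>
    have hxL : vpath x L = vpath y L := by
      refine ih (by omega) (by omega) (vpath_eq_vpath_of_le L.le_succ ?_ ?_ hag) <;>
        simp only [List.length_append, List.length_singleton] <;> omega
    rw [vpath_append_of_le_vcut hLx] at hag
    rcases le_or_gt (L + 1) (vcut y b) with hy | hy
    · rwa [vpath_append_of_le_vcut hy] at hag
    rw [vpath_append_succ (by omega) (by omega)] at hag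
    -- Both are children of `vpath y L`, and `x ≺ y` and `lastDiffLT_vstar_append` order them
    -- oppositely.
    by_contra hne
    have hld := h.lastDiffLT_vpath hxy (by omega) hLy hxL hne
    obtain ⟨c, hc⟩ := exists_getLast?_vpath (by omega) hLy
    have hld' := lastDiffLT_vstar_append (vstar_vpath hLy) hc (getLast?_vpath_le hy hLy c hc)
      fun he => hne (hag.trans he.symm)
    exact hld'.asymm (hag ▸ hld)

theorem VLess.vpath_append_length_ne (h : VLess x y) (hxy : x ≠ y) (hlt : y.length < x.length) :
    vpath (x ++ [a]) (y.length + 1) ≠ y ++ [b] := by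
  intro he
  apply h.vpath_length_ne hxy hlt
  rcases le_or_gt y.length (vcut x a) with hy | hy
  · have hag : vpath (x ++ [a]) y.length = vpath (y ++ [b]) y.length :=
      vpath_eq_vpath_of_le y.length.le_succ
        (by simp only [List.length_append, List.length_singleton]; omega) (by simp)
        (by simpa using he)
    rw [h.vpath_eq_of_vpath_append_eq hxy hy le_rfl hag, vpath_length]
  · rw [vpath_append_succ hy.le hlt.le] at he
    exact List.append_inj_left' he rfl

theorem VLess.lastDiffLT_vpath_succ_vpath_append (h : VLess x y) (hxy : x ≠ y) {L : ℕ}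
    (hx : L + 1 ≤ vcut x a) (hy : vcut y b ≤ L) (hLy : L ≤ y.length)
    (hag : vpath (x ++ [a]) L = vpath (y ++ [b]) L) (hdiff : vpath x (L + 1) ≠ vpath y L ++ [b]) :
    LastDiffLT (vpath x (L + 1)) (vpath y L ++ [b]) := by
  have hxL : vpath x L = vpath y L := h.vpath_eq_of_vpath_append_eq hxy (by omega) hLy hag
  have hLx : L + 1 ≤ x.length := hx.trans vcut_le_length
  obtain ⟨c, hc⟩ := exists_getLast?_vpath (by omega) hLx
  have hcb : c ≤ b := by
    rcases hLy.lt_or_eq with hLy | rfl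
    · obtain ⟨d, hd⟩ := exists_getLast?_vpath (by omega) hLy
      have hdb := getLast?_vpath_le (a := b) (by omega) hLy d hd
      by_cases heq : vpath x (L + 1) = vpath y (L + 1)
      · rw [heq, hd, Option.some_inj] at hc
        exact hc ▸ hdb
      · refine le_trans ?_ hdb
        exact (h.lastDiffLT_vpath hxy (by omega) hLy hxL heq).getLast?_le
          (by rw [length_vpath hLx, length_vpath hLy]) hc hd
    · exact absurd (by rw [hxL, vpath_length]) (h.vpath_length_ne hxy (by omega))
  exact lastDiffLT_vstar_append (by rw [vstar_vpath hLx, hxL]) hc hcb hdiff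

theorem VLess.lastDiffLT_vpath_append_vpath_append (h : VLess x y) (hxy : x ≠ y) (hab : a ≤ b)
    {L : ℕ} (hx : vcut x a ≤ L) (hy : vcut y b ≤ L) (hLx : L ≤ x.length) (hLy : L ≤ y.length)
    (hag : vpath (x ++ [a]) L = vpath (y ++ [b]) L)
    (hdiff : vpath x L ++ [a] ≠ vpath y L ++ [b]) :
    LastDiffLT (vpath x L ++ [a]) (vpath y L ++ [b]) := by
  rw [lastDiffLT_append_singleton_iff (by rw [length_vpath hLx, length_vpath hLy])]
  rcases hab.lt_or_eq with hab | rfl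
  · exact .inl hab
  refine .inr ⟨rfl, ?_⟩
  have hne : vpath x L ≠ vpath y L := fun he => hdiff (by rw [he])
  have hxL : vcut x a < L := by
    by_contra! hle
    exact hne (h.vpath_eq_of_vpath_append_eq hxy hle hLy hag)
  obtain ⟨L, rfl⟩ : ∃ L', L = L' + 1 := ⟨L - 1, by omega⟩
  rw [vpath_append_succ (by omega) (by omega)] at hag
  rcases hy.lt_or_eq with hyL | hyL
  · rw [vpath_append_succ (by omega) (by omega)] at hag
    exact h.lastDiffLT_vpath hxy (by omega) (by omega) (List.append_inj_left' hag rfl) hne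
  · obtain ⟨c, hc, hac⟩ := exists_lt_getLast?_vpath (by omega) hyL.ge
    rw [← vpath_append_of_le_vcut hyL.ge, ← hag, List.getLast?_concat, Option.mem_def,
      Option.some_inj] at hc
    exact absurd (hc ▸ hac) (lt_irrefl a)

theorem VLess.lastDiffLT_vpath_append (h : VLess x y) (hxy : x ≠ y) (hab : a ≤ b) {L : ℕ}
    (hLx : L ≤ x.length) (hLy : L ≤ y.length) (hag : vpath (x ++ [a]) L = vpath (y ++ [b]) L)
    (hdiff : vpath (x ++ [a]) (L + 1) ≠ vpath (y ++ [b]) (L + 1)) :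
    LastDiffLT (vpath (x ++ [a]) (L + 1)) (vpath (y ++ [b]) (L + 1)) := by
  have hxa : vcut x a ≤ x.length := vcut_le_length
  have hyb : vcut y b ≤ y.length := vcut_le_length
  rcases le_or_gt (L + 1) (vcut x a) with hx | hx <;>
    rcases le_or_gt (L + 1) (vcut y b) with hy | hy
  · rw [vpath_append_of_le_vcut hx, vpath_append_of_le_vcut hy] at hdiff ⊢
    rw [vpath_append_of_le_vcut (by omega), vpath_append_of_le_vcut (by omega)] at hag
    exact h.lastDiffLT_vpath hxy (by omega) (by omega) hag hdiff
  · rw [vpath_append_of_le_vcut hx, vpath_append_succ (by omega) hLy] at hdiff ⊢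
    exact h.lastDiffLT_vpath_succ_vpath_append hxy hx (by omega) hLy hag hdiff
  · obtain ⟨c, hc, hbc⟩ := exists_lt_getLast?_vpath (by omega) hy
    rw [vpath_append_succ (by omega) hLx, vpath_append_of_le_vcut hy]
    exact lastDiffLT_of_getLast?_lt
      (by simp [length_vpath hLx, length_vpath (hy.trans hyb)])
      List.getLast?_concat hc (hab.trans_lt hbc)
  · rw [vpath_append_succ (by omega) hLx, vpath_append_succ (by omega) hLy] at hdiff ⊢
    exact h.lastDiffLT_vpath_append_vpath_append hxy hab (by omega) (by omega) hLx hLy hag hdiff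

end Append

/-- For distinct strings `x`, `y` and letters `λ ≤ μ`:
if `x ≺ y` in V-order then `xλ ≺ yμ`. -/
theorem vless_append_mono {α : Type*} [LinearOrder α]
    (x y : List α) (lam mu : α) (hxy : x ≠ y) (hlm : lam ≤ mu) :
    VLess x y → VLess (x ++ [lam]) (y ++ [mu]) := by
  intro h
  have hne : x ++ [lam] ≠ y ++ [mu] := fun he => hxy (List.append_inj_left' he rfl)
  rw [vless_iff hne]
  rcases vpath_cases_of_ne hne with hanc | ⟨hlt, hanc⟩ | ⟨L, hLx, hLy, hag, hdiff⟩
  · exact .inl hanc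
  · simp only [List.length_append, List.length_singleton] at hlt hanc
    exact absurd hanc (h.vpath_append_length_ne hxy (by omega))
  · refine .inr ⟨L, hLx, hLy, hag, h.lastDiffLT_vpath_append hxy hlm ?_ ?_ hag hdiff⟩ <;>
      simp only [List.length_append, List.length_singleton] at hLx hLy <;> omega
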